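/- Consider the deterministic coupled map lattice Ξ_{n+1}(x) = φ_μ(δ_R(x;Ξ_n)) on [0,1/e]^{ℤ^d} with μ ∈ (1, e²). Let ψ(w) = min(aw, b) with a > 1, b > 0 be such that ψ ≤ φ_μ on [0,1]. Then for all n ∈ ℕ and z ∈ ℤ^d, Ξ_n(z) ≥ Σ_{y∈ℤ^d} p^{(n)}(z,y)·min(a^n Ξ₀(y), b), where p^{(n)} is the n-step transition kernel of the random walk with uniform steps on B_R(0). -/

import Mathlib

/-- `d`-dimensional local density `δ_R(x;Ξ) = V_R^{-d} Σ_{y ∈ B_R(x)} Ξ(y)`. -/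
noncomputable def dens (d R : ℕ) (η : (Fin d → ℤ) → ℝ) (x : Fin d → ℤ) : ℝ :=
  ((2 * R + 1 : ℝ) ^ d)⁻¹ *
    ∑ y ∈ Finset.Icc (fun i => x i - (R : ℤ)) (fun i => x i + (R : ℤ)), η y

/-- `φ_μ(w) = μ w e^{-μ w}`. -/
noncomputable def phi (μ w : ℝ) : ℝ := μ * w * Real.exp (-(μ * w))

/-!
The lattice stays in `[0,1]`, hence so does every local density, and there `ψ ≤ φ_μ`.
Write `u_n = min (a^n Ξ₀) b`. The first-step decomposition
`p^{(n+1)}(z,·) = V⁻¹ Σ_{x ∈ B_R(0)} p^{(n)}(z+x,·)` turns the induction hypothesis into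
`δ_R(z;Ξ_n) ≥ Σ_y p^{(n+1)}(z,y) u_n(y)`. As `ψ` is nondecreasing and concave, Jensen's inequality
gives `Ξ_{n+1}(z) ≥ ψ(δ_R(z;Ξ_n)) ≥ Σ_y p^{(n+1)}(z,y) ψ(u_n(y))`, and `ψ ∘ u_n ≥ u_{n+1}` since
`a ≥ 1`.
-/

section Expectation

variable {ι : Type*} {w f g : ι → ℝ} {C : ℝ}

lemma summable_mul_of_abs_le (hw0 : ∀ i, 0 ≤ w i) (hw : Summable w) (hg : ∀ i, |g i| ≤ C) :
    Summable fun i => w i * g i :=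
  (hw.mul_right C).of_norm_bounded fun i => by
    rw [Real.norm_eq_abs, abs_mul, abs_of_nonneg (hw0 i)]
    exact mul_le_mul_of_nonneg_left (hg i) (hw0 i)

lemma tsum_mul_le_tsum_mul (hw0 : ∀ i, 0 ≤ w i) (hw : Summable w) {C' : ℝ}
    (hf : ∀ i, |f i| ≤ C) (hg : ∀ i, |g i| ≤ C') (hfg : ∀ i, f i ≤ g i) :
    ∑' i, w i * f i ≤ ∑' i, w i * g i :=
  (summable_mul_of_abs_le hw0 hw hf).tsum_le_tsum
    (fun i => mul_le_mul_of_nonneg_left (hfg i) (hw0 i)) (summable_mul_of_abs_le hw0 hw hg)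

lemma tsum_mul_min_le_min_tsum (hw0 : ∀ i, 0 ≤ w i) (hw : HasSum w 1) (hg : ∀ i, |g i| ≤ C)
    (a b : ℝ) : ∑' i, w i * min (a * g i) b ≤ min (a * ∑' i, w i * g i) b := by
  have hag : ∀ i, |a * g i| ≤ |a| * C := fun i => by
    rw [abs_mul]; exact mul_le_mul_of_nonneg_left (hg i) (abs_nonneg a)
  have hmin : ∀ i, |min (a * g i) b| ≤ max (|a| * C) |b| := fun i =>
    abs_min_le_max_abs_abs.trans (max_le_max (hag i) le_rfl)
  apply le_min
  · calc ∑' i, w i * min (a * g i) b ≤ ∑' i, w i * (a * g i) :=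
          tsum_mul_le_tsum_mul hw0 hw.summable hmin hag fun i => min_le_left _ _
      _ = a * ∑' i, w i * g i := by simp_rw [mul_left_comm]; exact tsum_mul_left
  · calc ∑' i, w i * min (a * g i) b ≤ ∑' i, w i * b :=
          tsum_mul_le_tsum_mul (g := fun _ => b) hw0 hw.summable hmin (fun _ => le_rfl)
            fun _ => min_le_right _ _
      _ = b := by rw [tsum_mul_right, hw.tsum_eq, one_mul]

end Expectation

noncomputable abbrev box (d R : ℕ) : Finset (Fin d → ℤ) :=
  Finset.Icc (fun _ => -(R : ℤ)) (fun _ => (R : ℤ))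

lemma card_box (d R : ℕ) : ((box d R).card : ℝ) = (2 * R + 1) ^ d := by
  have h : (Finset.Icc (-(R : ℤ)) R).card = 2 * R + 1 := by rw [Int.card_Icc]; omega
  rw [Pi.card_Icc, Finset.prod_const, h, Finset.card_univ, Fintype.card_fin]
  push_cast
  ring

lemma dens_eq_sum_box (d R : ℕ) (η : (Fin d → ℤ) → ℝ) (z : Fin d → ℤ) :
    dens d R η z = ((2 * R + 1 : ℝ) ^ d)⁻¹ * ∑ x ∈ box d R, η (z + x) := by
  have h : Finset.Icc (fun i => z i - (R : ℤ)) (fun i => z i + (R : ℤ))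
      = (box d R).map (addLeftEmbedding z) := by
    rw [Finset.map_add_left_Icc]; congr 1
  unfold dens
  rw [h, Finset.sum_map]
  rfl

lemma dens_mem_Icc {d R : ℕ} {η : (Fin d → ℤ) → ℝ} (hη : ∀ y, η y ∈ Set.Icc (0 : ℝ) 1)
    (z : Fin d → ℤ) : dens d R η z ∈ Set.Icc (0 : ℝ) 1 := by
  rw [dens_eq_sum_box]
  have hV : (0 : ℝ) < (2 * R + 1) ^ d := by positivity
  refine ⟨mul_nonneg (by positivity) (Finset.sum_nonneg fun x _ => (hη (z + x)).1), ?_⟩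
  calc ((2 * R + 1 : ℝ) ^ d)⁻¹ * ∑ x ∈ box d R, η (z + x)
      ≤ ((2 * R + 1 : ℝ) ^ d)⁻¹ * ∑ x ∈ box d R, 1 := by
        gcongr with x; exact (hη (z + x)).2
    _ = 1 := by rw [Finset.sum_const, nsmul_one, card_box, inv_mul_cancel₀ hV.ne']

section Kernel

variable {d R : ℕ} {p : ℕ → (Fin d → ℤ) → (Fin d → ℤ) → ℝ}

lemma kernel_nonneg (hp0 : ∀ z y, p 0 z y = if z = y then 1 else 0)
    (hps : ∀ n z y, p (n + 1) z y = ((2 * R + 1 : ℝ) ^ d)⁻¹ * ∑ x ∈ box d R, p n (z + x) y) :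
    ∀ n z y, 0 ≤ p n z y := by
  intro n
  induction n with
  | zero => intro z y; rw [hp0]; split_ifs <;> norm_num
  | succ n ih =>
    intro z y
    rw [hps]
    exact mul_nonneg (by positivity) (Finset.sum_nonneg fun x _ => ih _ _)

lemma kernel_hasSum_one (hp0 : ∀ z y, p 0 z y = if z = y then 1 else 0)
    (hps : ∀ n z y, p (n + 1) z y = ((2 * R + 1 : ℝ) ^ d)⁻¹ * ∑ x ∈ box d R, p n (z + x) y) :
    ∀ n z, HasSum (p n z) 1 := by
  intro n
  induction n with
  | zero =>
    intro z
    convert hasSum_ite_eq z (1 : ℝ) using 2 with y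
    rw [hp0]
    exact if_congr eq_comm rfl rfl
  | succ n ih =>
    intro z
    have hV : (0 : ℝ) < (2 * R + 1) ^ d := by positivity
    have h := (hasSum_sum fun x _ => ih (z + x) : HasSum _ (∑ x ∈ box d R, (1 : ℝ))).mul_left
      ((2 * R + 1 : ℝ) ^ d)⁻¹
    rw [Finset.sum_const, nsmul_one, card_box, inv_mul_cancel₀ hV.ne'] at h
    rwa [funext (hps n z)]

lemma tsum_kernel_zero (hp0 : ∀ z y, p 0 z y = if z = y then 1 else 0)
    (g : (Fin d → ℤ) → ℝ) (z : Fin d → ℤ) : ∑' y, p 0 z y * g y = g z := by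
  rw [tsum_eq_single z fun y hy => by rw [hp0, if_neg (Ne.symm hy), zero_mul], hp0, if_pos rfl,
    one_mul]

lemma tsum_kernel_succ (hp0 : ∀ z y, p 0 z y = if z = y then 1 else 0)
    (hps : ∀ n z y, p (n + 1) z y = ((2 * R + 1 : ℝ) ^ d)⁻¹ * ∑ x ∈ box d R, p n (z + x) y)
    {g : (Fin d → ℤ) → ℝ} {C : ℝ} (hg : ∀ y, |g y| ≤ C) (n : ℕ) (z : Fin d → ℤ) :
    ∑' y, p (n + 1) z y * g y
      = ((2 * R + 1 : ℝ) ^ d)⁻¹ * ∑ x ∈ box d R, ∑' y, p n (z + x) y * g y := by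
  have hs : ∀ x ∈ box d R, Summable fun y => p n (z + x) y * g y := fun x _ =>
    summable_mul_of_abs_le (kernel_nonneg hp0 hps n (z + x))
      (kernel_hasSum_one hp0 hps n (z + x)).summable hg
  simp_rw [hps, mul_assoc, Finset.sum_mul]
  rw [tsum_mul_left, Summable.tsum_finsetSum hs]

end Kernel

lemma phi_nonneg {μ w : ℝ} (hμ : 0 ≤ μ) (hw : 0 ≤ w) : 0 ≤ phi μ w := by
  unfold phi; positivity

lemma phi_le_one (μ w : ℝ) : phi μ w ≤ 1 :=
  (Real.mul_exp_neg_le_exp_neg_one (μ * w)).trans (Real.exp_le_one_iff.2 (by norm_num))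

lemma coupledMap_mem_Icc {d R : ℕ} {μ : ℝ} (hμ : 0 ≤ μ) {Ξ : ℕ → (Fin d → ℤ) → ℝ}
    (hΞ0 : ∀ x, Ξ 0 x ∈ Set.Icc (0 : ℝ) 1) (hΞ : ∀ n x, Ξ (n + 1) x = phi μ (dens d R (Ξ n) x)) :
    ∀ n x, Ξ n x ∈ Set.Icc (0 : ℝ) 1 := by
  intro n
  induction n with
  | zero => exact hΞ0
  | succ n ih =>
    intro x
    rw [hΞ]
    exact ⟨phi_nonneg hμ (dens_mem_Icc ih x).1, phi_le_one _ _⟩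

lemma abs_min_le_of_nonneg {s b : ℝ} (hs : 0 ≤ s) (hb : 0 ≤ b) : |min s b| ≤ b := by
  rw [abs_of_nonneg (le_min hs hb)]
  exact min_le_right _ _

lemma min_mul_le_min_mul_min {a b : ℝ} (ha : 1 ≤ a) (hb : 0 ≤ b) (s : ℝ) :
    min (a * s) b ≤ min (a * min s b) b := by
  rcases le_total s b with h | h
  · rw [min_eq_left h]
  · rw [min_eq_right h, min_eq_right (le_mul_of_one_le_left hb ha)]
    exact min_le_right _ _

theorem stmt18_general (d R : ℕ) (μ a b : ℝ) (hμ1 : 1 < μ)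
    (ha : 1 < a) (hb : 0 < b)
    (hψle : ∀ w ∈ Set.Icc (0 : ℝ) 1, min (a * w) b ≤ phi μ w)
    (Ξ : ℕ → (Fin d → ℤ) → ℝ)
    (hΞ0 : ∀ x, Ξ 0 x ∈ Set.Icc (0 : ℝ) (Real.exp 1)⁻¹)
    (hΞ : ∀ n x, Ξ (n + 1) x = phi μ (dens d R (Ξ n) x))
    (p : ℕ → (Fin d → ℤ) → (Fin d → ℤ) → ℝ)
    (hp0 : ∀ z y, p 0 z y = if z = y then 1 else 0)
    (hps : ∀ n z y, p (n + 1) z y =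
      ((2 * R + 1 : ℝ) ^ d)⁻¹ *
        ∑ x ∈ Finset.Icc (fun _ => -(R : ℤ)) (fun _ => (R : ℤ)), p n (z + x) y) :
    ∀ (n : ℕ) (z : Fin d → ℤ),
      (∑' y : Fin d → ℤ, p n z y * min (a ^ n * Ξ 0 y) b) ≤ Ξ n z := by
  have hΞ01 : ∀ x, Ξ 0 x ∈ Set.Icc (0 : ℝ) 1 := fun x =>
    ⟨(hΞ0 x).1, (hΞ0 x).2.trans (inv_le_one_of_one_le₀ (Real.one_le_exp zero_le_one))⟩
  have hΞmem := coupledMap_mem_Icc (by linarith) hΞ01 hΞ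
  have hu0 : ∀ n y, 0 ≤ a ^ n * Ξ 0 y := fun n y => mul_nonneg (by positivity) (hΞ01 y).1
  have hu : ∀ n y, |min (a ^ n * Ξ 0 y) b| ≤ b := fun n y => abs_min_le_of_nonneg (hu0 n y) hb.le
  have hψu : ∀ n y, |min (a * min (a ^ n * Ξ 0 y) b) b| ≤ b := fun n y =>
    abs_min_le_of_nonneg (mul_nonneg (by positivity) (le_min (hu0 n y) hb.le)) hb.le
  intro n
  induction n with
  | zero =>
    intro z
    rw [tsum_kernel_zero hp0, pow_zero, one_mul]
    exact min_le_left _ _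
  | succ n ih =>
    intro z
    have hpn := kernel_nonneg hp0 hps (n + 1) z
    have hpsum := kernel_hasSum_one hp0 hps (n + 1) z
    calc ∑' y, p (n + 1) z y * min (a ^ (n + 1) * Ξ 0 y) b
        ≤ ∑' y, p (n + 1) z y * min (a * min (a ^ n * Ξ 0 y) b) b :=
          tsum_mul_le_tsum_mul hpn hpsum.summable (hu (n + 1)) (hψu n) fun y => by
            rw [pow_succ', mul_assoc]
            exact min_mul_le_min_mul_min ha.le hb.le _
      _ ≤ min (a * ∑' y, p (n + 1) z y * min (a ^ n * Ξ 0 y) b) b :=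
          tsum_mul_min_le_min_tsum hpn hpsum (hu n) a b
      _ = min (a * (((2 * R + 1 : ℝ) ^ d)⁻¹ *
            ∑ x ∈ box d R, ∑' y, p n (z + x) y * min (a ^ n * Ξ 0 y) b)) b := by
          rw [tsum_kernel_succ hp0 hps (hu n)]
      _ ≤ min (a * dens d R (Ξ n) z) b := by
          rw [dens_eq_sum_box]
          gcongr with x
          exact ih (z + x)
      _ ≤ phi μ (dens d R (Ξ n) z) := hψle _ (dens_mem_Icc (hΞmem n) z)
      _ = Ξ (n + 1) z := (hΞ n z).symm

/-- Lower bound for the coupled map lattice `Ξ_{n+1}(x) = φ_μ(δ_R(x;Ξ_n))` on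
`[0,1/e]^{ℤ^d}` with `μ ∈ (1,e²)`: if `ψ(w) = min(aw, b)` with `a > 1`, `b > 0`
satisfies `ψ ≤ φ_μ` on `[0,1]`, then
`Ξ_n(z) ≥ Σ_y p^{(n)}(z,y)·min(a^n Ξ₀(y), b)`, where `p^{(n)}` is the `n`-step kernel of
the random walk with uniform steps on `B_R(0)`. -/
theorem stmt18 (d R : ℕ) (μ a b : ℝ) (hμ1 : 1 < μ) (hμ2 : μ < Real.exp 2)
    (ha : 1 < a) (hb : 0 < b)
    (hψle : ∀ w ∈ Set.Icc (0 : ℝ) 1, min (a * w) b ≤ phi μ w)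
    (Ξ : ℕ → (Fin d → ℤ) → ℝ)
    (hΞ0 : ∀ x, Ξ 0 x ∈ Set.Icc (0 : ℝ) (Real.exp 1)⁻¹)
    (hΞ : ∀ n x, Ξ (n + 1) x = phi μ (dens d R (Ξ n) x))
    (p : ℕ → (Fin d → ℤ) → (Fin d → ℤ) → ℝ)
    (hp0 : ∀ z y, p 0 z y = if z = y then 1 else 0)
    (hps : ∀ n z y, p (n + 1) z y =
      ((2 * R + 1 : ℝ) ^ d)⁻¹ *
        ∑ x ∈ Finset.Icc (fun _ => -(R : ℤ)) (fun _ => (R : ℤ)), p n (z + x) y) :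
    ∀ (n : ℕ) (z : Fin d → ℤ),
      (∑' y : Fin d → ℤ, p n z y * min (a ^ n * Ξ 0 y) b) ≤ Ξ n z :=
  stmt18_general d R μ a b hμ1 ha hb hψle Ξ hΞ0 hΞ p hp0 hps
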